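/- The map (a,b,c,d) ↦ (r1,r2,r3,r4) = (-2c+d, -a+b, -b+c, a) is a bijection from the set S_ℓ = {(a,b,c,d) ∈ ℤ≥0⁴ : 3c ≤ b+d, a ≤ b ≤ c, -c+d ≤ ℓ} onto the set T_ℓ = {(r1,r2,r3,r4) ∈ ℤ≥0⁴ : r3 ≤ r1, r1+r2+r3+r4 ≤ ℓ}. -/
import Mathlib


/-- The set `S_ℓ` of type `D₄⁽³⁾`: quadruples `(a,b,c,d)` of nonnegative integers with
`3c ≤ b + d`, `a ≤ b ≤ c`, `-c + d ≤ ℓ`. -/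
def Sset (ℓ : ℤ) : Set (ℤ × ℤ × ℤ × ℤ) :=
  {p | 0 ≤ p.1 ∧ 0 ≤ p.2.1 ∧ 0 ≤ p.2.2.1 ∧ 0 ≤ p.2.2.2 ∧
    3 * p.2.2.1 ≤ p.2.1 + p.2.2.2 ∧ p.1 ≤ p.2.1 ∧ p.2.1 ≤ p.2.2.1 ∧
    -p.2.2.1 + p.2.2.2 ≤ ℓ}

/-- The set `T_ℓ` of type `D₄⁽³⁾`: quadruples `(r₁,r₂,r₃,r₄)` of nonnegative integers with
`r₃ ≤ r₁` and `r₁ + r₂ + r₃ + r₄ ≤ ℓ`. -/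
def Tset (ℓ : ℤ) : Set (ℤ × ℤ × ℤ × ℤ) :=
  {r | 0 ≤ r.1 ∧ 0 ≤ r.2.1 ∧ 0 ≤ r.2.2.1 ∧ 0 ≤ r.2.2.2 ∧
    r.2.2.1 ≤ r.1 ∧ r.1 + r.2.1 + r.2.2.1 + r.2.2.2 ≤ ℓ}

/-- The substitution `(a,b,c,d) ↦ (-2c+d, -a+b, -b+c, a)` is a bijection from `S_ℓ`
onto `T_ℓ` (type `D₄⁽³⁾`). -/
theorem Sset_bijOn_Tset (ℓ : ℤ) (hℓ : 1 ≤ ℓ) :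
    Set.BijOn (fun p : ℤ × ℤ × ℤ × ℤ =>
      (-2 * p.2.2.1 + p.2.2.2, -p.1 + p.2.1, -p.2.1 + p.2.2.1, p.1))
      (Sset ℓ) (Tset ℓ) := by
  refine ⟨?_, ?_, ?_⟩
  · rintro ⟨a, b, c, d⟩ h
    simp only [Sset, Set.mem_setOf_eq] at h
    simp only [Tset, Set.mem_setOf_eq]
    omega
  · rintro ⟨a, b, c, d⟩ _ ⟨a', b', c', d'⟩ _ h
    simp only [Prod.mk.injEq] at h ⊢
    omega
  · rintro ⟨r1, r2, r3, r4⟩ h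
    simp only [Tset, Set.mem_setOf_eq] at h
    refine ⟨(r4, r4 + r2, r4 + r2 + r3, r1 + 2 * (r4 + r2 + r3)), ?_, ?_⟩
    · simp only [Sset, Set.mem_setOf_eq]; omega
    · dsimp only; exact Prod.ext (by ring) (Prod.ext (by ring) (Prod.ext (by ring) rfl))
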